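/- Let u₀ ∈ C(ℝ) be compactly supported with 0 ≤ u₀ ≤ 1, u₀ ≢ 0, let w(t,·) = Γ(t,·) * u₀ where Γ(t,x) = (4πt)^{−1/2} e^{−x²/(4t)}, let Θ ∈ (0,1], and let χ : ℝ → ℝ be a smooth cut-off with 0 ≤ χ ≤ 1, χ(x) = 1 for |x| ≤ 1/2 and χ(x) = 0 for |x| ≥ 1. Define z(t,x) = Θ χ(x/√t) w(t,x). Then ‖∂ₓz(t,·)‖_{L²(ℝ)} = O(t^{−3/4}) as t → +∞; consequently the dissipation part of the energy satisfies (1/2)∫_{−√t}^{√t} |∂ₓz(t,x)|² dx = O(t^{−3/2}) as t → +∞. -/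

import Mathlib

/-- The one-dimensional heat kernel `Γ(t,x) = (4πt)^{−1/2} e^{−x²/(4t)}`. -/
noncomputable def heatKernel (t x : ℝ) : ℝ :=
  (Real.sqrt (4 * Real.pi * t))⁻¹ * Real.exp (-(x ^ 2) / (4 * t))

open MeasureTheory Filter Real Set


lemma heatKernel_nonneg {t : ℝ} (x : ℝ) : 0 ≤ heatKernel t x := by
  unfold heatKernel; positivity

lemma heatKernel_continuous (t : ℝ) : Continuous (heatKernel t) := by
  unfold heatKernel; fun_prop

lemma heatKernel_hasDerivAt {t : ℝ} (ht : 0 < t) (x : ℝ) :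
    HasDerivAt (heatKernel t) (-(x / (2 * t)) * heatKernel t x) x := by
  have h1 : HasDerivAt (fun x : ℝ => -(x ^ 2) / (4 * t)) (-(2 * x) / (4 * t)) x := by
    have := ((hasDerivAt_pow 2 x).neg).div_const (4 * t)
    simpa using this
  have h2 := (h1.exp).const_mul (Real.sqrt (4 * Real.pi * t))⁻¹
  refine h2.congr_deriv ?_
  unfold heatKernel
  field_simp
  ring

lemma sqrt_inv_le {t : ℝ} (ht : 0 < t) :
    (Real.sqrt (4 * Real.pi * t))⁻¹ ≤ (Real.sqrt t)⁻¹ := by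
  apply inv_anti₀ (Real.sqrt_pos.mpr ht)
  apply Real.sqrt_le_sqrt
  nlinarith [Real.pi_gt_three]

lemma heatKernel_abs_le {t : ℝ} (ht : 0 < t) (x : ℝ) :
    |heatKernel t x| ≤ (Real.sqrt t)⁻¹ := by
  rw [abs_of_nonneg (heatKernel_nonneg x)]
  unfold heatKernel
  have h1 : Real.exp (-(x ^ 2) / (4 * t)) ≤ 1 := by
    rw [Real.exp_le_one_iff, neg_div]
    have : 0 ≤ x ^ 2 / (4 * t) := by positivity
    linarith
  calc (Real.sqrt (4 * Real.pi * t))⁻¹ * Real.exp (-(x ^ 2) / (4 * t))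
      ≤ (Real.sqrt t)⁻¹ * 1 := by
        apply mul_le_mul (sqrt_inv_le ht) h1 (Real.exp_pos _).le (by positivity)
    _ = (Real.sqrt t)⁻¹ := mul_one _

lemma abs_mul_exp_le_aux (s x : ℝ) (hs : 0 < s) :
    |x| * Real.exp (-(x ^ 2) / (4 * s ^ 2)) ≤ 2 * s := by
  have h1 : 1 + x ^ 2 / (4 * s ^ 2) ≤ Real.exp (x ^ 2 / (4 * s ^ 2)) := by
    have := Real.add_one_le_exp (x ^ 2 / (4 * s ^ 2)); linarith
  have h3 : (0:ℝ) < Real.exp (x ^ 2 / (4 * s ^ 2)) := Real.exp_pos _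
  have h2 : Real.exp (-(x ^ 2) / (4 * s ^ 2)) = (Real.exp (x ^ 2 / (4 * s ^ 2)))⁻¹ := by
    rw [← Real.exp_neg]; ring_nf
  rw [h2, mul_inv_le_iff₀ h3]
  have key : |x| ≤ 2 * s * (1 + x ^ 2 / (4 * s ^ 2)) := by
    rw [← sub_nonneg]
    have e : 2 * s * (1 + x ^ 2 / (4 * s ^ 2)) - |x|
        = ((2 * s - |x|) ^ 2 + 4 * s ^ 2 + x ^ 2) / (4 * s) := by
      have hx : x ^ 2 = |x| ^ 2 := (sq_abs x).symm
      have hs' : s ≠ 0 := ne_of_gt hs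
      rw [hx, eq_div_iff (by positivity : (4:ℝ) * s ≠ 0)]
      field_simp
      linear_combination 0 * hx
    rw [e]; positivity
  have h4 := mul_le_mul_of_nonneg_left h1 (show (0:ℝ) ≤ 2 * s by positivity)
  nlinarith [key, h4]

lemma abs_mul_exp_le {t : ℝ} (ht : 0 < t) (x : ℝ) :
    |x| * Real.exp (-(x ^ 2) / (4 * t)) ≤ 2 * Real.sqrt t := by
  have hs : Real.sqrt t ^ 2 = t := Real.sq_sqrt ht.le
  have := abs_mul_exp_le_aux (Real.sqrt t) x (Real.sqrt_pos.mpr ht)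
  rwa [hs] at this

lemma heatKernel_deriv_abs_le {t : ℝ} (ht : 0 < t) (x : ℝ) :
    |(-(x / (2 * t))) * heatKernel t x| ≤ t⁻¹ := by
  have hsn : 0 < Real.sqrt t := Real.sqrt_pos.mpr ht
  have hss : Real.sqrt t * Real.sqrt t = t := Real.mul_self_sqrt ht.le
  rw [abs_mul, abs_neg, abs_div, abs_of_pos (by positivity : (0:ℝ) < 2 * t),
    abs_of_nonneg (heatKernel_nonneg x)]
  unfold heatKernel
  calc |x| / (2 * t) * ((Real.sqrt (4 * Real.pi * t))⁻¹ * Real.exp (-(x ^ 2) / (4 * t)))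
      = (Real.sqrt (4 * Real.pi * t))⁻¹ * (|x| * Real.exp (-(x ^ 2) / (4 * t))) / (2 * t) := by
        ring
    _ ≤ (Real.sqrt t)⁻¹ * (2 * Real.sqrt t) / (2 * t) := by
        apply div_le_div_of_nonneg_right ?_ (by positivity)
        exact mul_le_mul (sqrt_inv_le ht) (abs_mul_exp_le ht x) (by positivity) (by positivity)
    _ = t⁻¹ := by
        rw [inv_mul_eq_div, div_div, div_eq_inv_mul, mul_comm]
        congr 1
        field_simp


/-- The solution `w(t,·) = Γ(t,·) * u₀` of the heat equation with data `u₀`. -/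
noncomputable def heatConv (u₀ : ℝ → ℝ) (t x : ℝ) : ℝ :=
  ∫ y, heatKernel t (x - y) * u₀ y

lemma heatConv_hasDerivAt (u₀ : ℝ → ℝ) (hc : Continuous u₀) (hsupp : HasCompactSupport u₀)
    {t : ℝ} (ht : 0 < t) (x₀ : ℝ) :
    HasDerivAt (heatConv u₀ t)
      (∫ y, -((x₀ - y) / (2 * t)) * heatKernel t (x₀ - y) * u₀ y) x₀ := by
  have hu_int : Integrable (fun y => ‖u₀ y‖) :=
    (hc.norm).integrable_of_hasCompactSupport hsupp.norm
  have main := hasDerivAt_integral_of_dominated_loc_of_deriv_le (μ := volume) (x₀ := x₀)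
    (F := fun x y => heatKernel t (x - y) * u₀ y)
    (F' := fun x y => -((x - y) / (2 * t)) * heatKernel t (x - y) * u₀ y)
    (bound := fun y => t⁻¹ * ‖u₀ y‖) (s := Metric.ball x₀ 1) (Metric.ball_mem_nhds x₀ one_pos)
    (Filter.Eventually.of_forall fun x =>
      (((heatKernel_continuous t).comp (continuous_const.sub continuous_id)).mul hc).aestronglyMeasurable)
    ((((heatKernel_continuous t).comp (continuous_const.sub continuous_id)).mul hc).integrable_of_hasCompactSupport
      hsupp.mul_left)
    (((((continuous_const.sub continuous_id).div_const (2 * t)).neg.mul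
      ((heatKernel_continuous t).comp (continuous_const.sub continuous_id))).mul hc).aestronglyMeasurable)
    (Filter.Eventually.of_forall fun y => fun x _ => by
      rw [norm_mul]
      exact mul_le_mul_of_nonneg_right
        (by rw [Real.norm_eq_abs]; exact heatKernel_deriv_abs_le ht (x - y)) (norm_nonneg _))
    (hu_int.const_mul t⁻¹)
    (Filter.Eventually.of_forall fun y => fun x _ => by
      have h1 : HasDerivAt (fun x : ℝ => x - y) 1 x := (hasDerivAt_id x).sub_const y
      have h2 := HasDerivAt.comp x (heatKernel_hasDerivAt ht (x - y)) h1
      have h3 := h2.mul_const (u₀ y)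
      simpa [Function.comp] using h3)
  exact main.2

/-- **Decay of the dissipation energy.** For `z(t,x) = Θ χ(x/√t) w(t,x)` with
`w` the heat semigroup applied to a compactly supported continuous data
`0 ≤ u₀ ≤ 1`, `u₀ ≢ 0`, and `χ` a smooth cut-off, one has
`‖∂ₓz(t,·)‖_{L²(ℝ)} = O(t^{−3/4})` as `t → +∞`; consequently
`(1/2)∫_{−√t}^{√t} |∂ₓz(t,x)|² dx = O(t^{−3/2})` as `t → +∞`. -/
theorem dissipation_energy_decay
    (u₀ : ℝ → ℝ) (hu₀_cont : Continuous u₀) (hu₀_supp : HasCompactSupport u₀)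
    (hu₀_mem : ∀ x, 0 ≤ u₀ x ∧ u₀ x ≤ 1) (hu₀_ne : ∃ x, u₀ x ≠ 0)
    (Θ : ℝ) (hΘ : Θ ∈ Set.Ioc (0 : ℝ) 1)
    (χ : ℝ → ℝ) (hχ_smooth : ContDiff ℝ (⊤ : ℕ∞) χ)
    (hχ_mem : ∀ x, 0 ≤ χ x ∧ χ x ≤ 1)
    (hχ_one : ∀ x : ℝ, |x| ≤ 1 / 2 → χ x = 1)
    (hχ_zero : ∀ x : ℝ, 1 ≤ |x| → χ x = 0)
    (z : ℝ → ℝ → ℝ)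
    (hz : ∀ t x, z t x = Θ * χ (x / Real.sqrt t) * heatConv u₀ t x) :
    (fun t => Real.sqrt (∫ x : ℝ, (deriv (z t) x) ^ 2))
      =O[Filter.atTop] (fun t : ℝ => t ^ (-(3 : ℝ) / 4)) ∧
    (fun t => (1 / 2) * ∫ x in Set.Ioo (-Real.sqrt t) (Real.sqrt t), (deriv (z t) x) ^ 2)
      =O[Filter.atTop] (fun t : ℝ => t ^ (-(3 : ℝ) / 2)) := by
  obtain ⟨hΘ0, hΘ1⟩ := hΘ
  set M := ∫ y, ‖u₀ y‖ with hM_def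
  have hM0 : 0 ≤ M := integral_nonneg fun y => norm_nonneg _
  have hu_int : Integrable (fun y => ‖u₀ y‖) :=
    hu₀_cont.norm.integrable_of_hasCompactSupport hu₀_supp.norm
  have hχsupp : HasCompactSupport χ := by
    apply HasCompactSupport.intro (isCompact_Icc (a := (-1:ℝ)) (b := 1))
    intro x hx
    apply hχ_zero
    by_contra h
    push_neg at h
    exact hx (Set.mem_Icc.mpr ⟨(abs_lt.mp h).1.le, (abs_lt.mp h).2.le⟩)
  obtain ⟨K, hK⟩ := (hχsupp.deriv).exists_bound_of_continuous (hχ_smooth.continuous_deriv (by simp))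
  have hK0 : 0 ≤ K := le_trans (norm_nonneg _) (hK 0)
  set C := 2 * ((K + 1) * M) ^ 2 with hC_def
  have hC0 : 0 ≤ C := by positivity
  have key : ∀ t : ℝ, 1 ≤ t →
      (∫ x, (deriv (z t) x) ^ 2) ≤ C * t ^ (-(3:ℝ)/2) ∧
      (∫ x in Set.Ioo (-Real.sqrt t) (Real.sqrt t), (deriv (z t) x) ^ 2)
        ≤ C * t ^ (-(3:ℝ)/2) := by
    intro t ht
    have ht0 : 0 < t := lt_of_lt_of_le one_pos ht
    set s := Real.sqrt t with hs_def
    have hs0 : 0 < s := Real.sqrt_pos.mpr ht0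
    have hss : s * s = t := Real.mul_self_sqrt ht0.le
    set W' : ℝ → ℝ := fun x => ∫ y, -((x - y) / (2 * t)) * heatKernel t (x - y) * u₀ y
      with hW'_def
    have hWb : ∀ x, |heatConv u₀ t x| ≤ s⁻¹ * M := by
      intro x
      rw [← Real.norm_eq_abs]
      calc ‖∫ y, heatKernel t (x - y) * u₀ y‖ ≤ ∫ y, s⁻¹ * ‖u₀ y‖ := by
            apply norm_integral_le_of_norm_le (hu_int.const_mul s⁻¹)
            apply Filter.Eventually.of_forall
            intro y
            rw [norm_mul]
            exact mul_le_mul_of_nonneg_right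
              (by rw [Real.norm_eq_abs]; exact heatKernel_abs_le ht0 (x - y)) (norm_nonneg _)
        _ = s⁻¹ * M := integral_const_mul _ _
    have hW'b : ∀ x, |W' x| ≤ t⁻¹ * M := by
      intro x
      rw [← Real.norm_eq_abs, hW'_def]
      calc ‖∫ y, -((x - y) / (2 * t)) * heatKernel t (x - y) * u₀ y‖
          ≤ ∫ y, t⁻¹ * ‖u₀ y‖ := by
            apply norm_integral_le_of_norm_le (hu_int.const_mul t⁻¹)
            apply Filter.Eventually.of_forall
            intro y
            rw [norm_mul]
            exact mul_le_mul_of_nonneg_right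
              (by rw [Real.norm_eq_abs]; exact heatKernel_deriv_abs_le ht0 (x - y))
              (norm_nonneg _)
        _ = t⁻¹ * M := integral_const_mul _ _
    have hW : ∀ x, HasDerivAt (heatConv u₀ t) (W' x) x :=
      fun x => heatConv_hasDerivAt u₀ hu₀_cont hu₀_supp ht0 x
    have hzt : z t = fun x => Θ * χ (x / s) * heatConv u₀ t x := funext fun x => hz t x
    set g : ℝ → ℝ := fun x =>
      Θ * (deriv χ (x / s) * (1 / s)) * heatConv u₀ t x + Θ * χ (x / s) * W' x with hg_def
    have hzd : ∀ x, HasDerivAt (z t) (g x) x := by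
      intro x
      rw [hzt]
      have h1 : HasDerivAt (fun x : ℝ => x / s) (1 / s) x := (hasDerivAt_id x).div_const s
      have h2 : HasDerivAt (fun x : ℝ => χ (x / s)) (deriv χ (x / s) * (1 / s)) x :=
        HasDerivAt.comp x ((hχ_smooth.differentiable (by simp) (x / s)).hasDerivAt) h1
      exact (h2.const_mul Θ).mul (hW x)
    have hderiv : ∀ x, deriv (z t) x = g x := fun x => (hzd x).deriv
    have hgb : ∀ x, |g x| ≤ (K + 1) * M * t⁻¹ := by
      intro x
      have e1 : |Θ| ≤ 1 := by rw [abs_of_pos hΘ0]; exact hΘ1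
      have e2 : |deriv χ (x / s)| ≤ K := by
        simpa [Real.norm_eq_abs] using hK (x / s)
      have e3 : |χ (x / s)| ≤ 1 := by
        rw [abs_of_nonneg (hχ_mem (x / s)).1]; exact (hχ_mem (x / s)).2
      have h1 : |Θ * (deriv χ (x / s) * (1 / s)) * heatConv u₀ t x| ≤ K * M * t⁻¹ := by
        rw [abs_mul, abs_mul, abs_mul, abs_of_pos (show (0:ℝ) < 1 / s by positivity)]
        calc |Θ| * (|deriv χ (x / s)| * (1 / s)) * |heatConv u₀ t x|
            ≤ 1 * (K * (1 / s)) * (s⁻¹ * M) := by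
              apply mul_le_mul _ (hWb x) (abs_nonneg _) (by positivity)
              exact mul_le_mul e1 (mul_le_mul_of_nonneg_right e2 (by positivity))
                (by positivity) one_pos.le
          _ = K * M * t⁻¹ := by
              rw [one_mul, one_div,
                show K * s⁻¹ * (s⁻¹ * M) = K * M * (s * s)⁻¹ by rw [mul_inv]; ring, hss]
      have h2 : |Θ * χ (x / s) * W' x| ≤ 1 * M * t⁻¹ := by
        rw [abs_mul, abs_mul]
        calc |Θ| * |χ (x / s)| * |W' x| ≤ 1 * 1 * (t⁻¹ * M) := by
              apply mul_le_mul _ (hW'b x) (abs_nonneg _) (by norm_num)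
              exact mul_le_mul e1 e3 (abs_nonneg _) one_pos.le
          _ = 1 * M * t⁻¹ := by ring
      calc |g x| ≤ |Θ * (deriv χ (x / s) * (1 / s)) * heatConv u₀ t x|
            + |Θ * χ (x / s) * W' x| := abs_add_le _ _
        _ ≤ K * M * t⁻¹ + 1 * M * t⁻¹ := add_le_add h1 h2
        _ = (K + 1) * M * t⁻¹ := by ring
    have hg0 : ∀ x, s < |x| → g x = 0 := by
      intro x hx
      have habs : 1 < |x / s| := by
        rw [abs_div, abs_of_pos hs0]
        exact (one_lt_div hs0).mpr hx
      have h1 : χ (x / s) = 0 := hχ_zero _ habs.le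
      have h2 : deriv χ (x / s) = 0 := by
        have hmem : {y : ℝ | 1 < |y|} ∈ nhds (x / s) :=
          (isOpen_lt continuous_const continuous_abs).mem_nhds habs
        have hev : χ =ᶠ[nhds (x / s)] (fun _ => (0:ℝ)) :=
          Filter.eventually_of_mem hmem fun y hy => hχ_zero y (le_of_lt hy)
        rw [hev.deriv_eq]
        simp
      simp [hg_def, h1, h2]
    have hgsq : ∀ x, (deriv (z t) x) ^ 2 ≤ ((K + 1) * M * t⁻¹) ^ 2 := by
      intro x
      rw [hderiv, ← sq_abs]
      exact pow_le_pow_left₀ (abs_nonneg _) (hgb x) 2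
    have hrw : ((K + 1) * M * t⁻¹) ^ 2 * (2 * s) = C * t ^ (-(3:ℝ)/2) := by
      have h1 : t ^ (-(3:ℝ)/2) = t⁻¹ * t⁻¹ * s := by
        rw [show (-(3:ℝ)/2) = (-1) + (-1) + (1/2 : ℝ) by norm_num, Real.rpow_add ht0,
          Real.rpow_add ht0, Real.rpow_neg_one, hs_def, Real.sqrt_eq_rpow]
      rw [h1, hC_def]; ring
    constructor
    · have hind : Integrable (Set.indicator (Set.Icc (-s) s)
          (fun _ => ((K + 1) * M * t⁻¹) ^ 2)) := by
        apply MeasureTheory.IntegrableOn.integrable_indicator _ measurableSet_Icc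
        exact (integrableOn_const_iff).mpr (Or.inr (by rw [Real.volume_Icc]; exact ENNReal.ofReal_lt_top))
      have hle : ∀ x, (deriv (z t) x) ^ 2 ≤ Set.indicator (Set.Icc (-s) s)
          (fun _ => ((K + 1) * M * t⁻¹) ^ 2) x := by
        intro x
        by_cases hx : x ∈ Set.Icc (-s) s
        · rw [Set.indicator_of_mem hx]; exact hgsq x
        · rw [Set.indicator_of_notMem hx, hderiv, hg0 x ?_]
          · norm_num
          · rw [Set.mem_Icc] at hx; push_neg at hx
            rcases le_or_gt (-s) x with h | h
            · exact lt_of_lt_of_le (hx h) (le_abs_self x)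
            · calc s < -x := by linarith
                _ ≤ |x| := neg_le_abs x
      calc (∫ x, (deriv (z t) x) ^ 2)
          ≤ ∫ x, Set.indicator (Set.Icc (-s) s) (fun _ => ((K + 1) * M * t⁻¹) ^ 2) x :=
            integral_mono_of_nonneg (Filter.Eventually.of_forall fun x => sq_nonneg _) hind
              (Filter.Eventually.of_forall hle)
        _ = ((K + 1) * M * t⁻¹) ^ 2 * (2 * s) := by
            rw [integral_indicator_const _ measurableSet_Icc, Real.volume_real_Icc_of_le (by linarith), smul_eq_mul]
            ring
        _ = C * t ^ (-(3:ℝ)/2) := hrw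
    · calc (∫ x in Set.Ioo (-s) s, (deriv (z t) x) ^ 2)
          ≤ ∫ _x in Set.Ioo (-s) s, ((K + 1) * M * t⁻¹) ^ 2 :=
            integral_mono_of_nonneg (Filter.Eventually.of_forall fun x => sq_nonneg _)
              ((integrableOn_const_iff).mpr
                (Or.inr (by rw [Real.volume_Ioo]; exact ENNReal.ofReal_lt_top)))
              (Filter.Eventually.of_forall fun x => hgsq x)
        _ = ((K + 1) * M * t⁻¹) ^ 2 * (2 * s) := by
            rw [setIntegral_const, Real.volume_real_Ioo_of_le (by linarith), smul_eq_mul]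
            ring
        _ = C * t ^ (-(3:ℝ)/2) := hrw
  have hev : ∀ᶠ t : ℝ in Filter.atTop, (1:ℝ) ≤ t := Filter.eventually_ge_atTop 1
  constructor
  · rw [Asymptotics.isBigO_iff]
    refine ⟨Real.sqrt C, ?_⟩
    filter_upwards [hev] with t ht
    have ht0 : 0 < t := lt_of_lt_of_le one_pos ht
    have h1 := (key t ht).1
    have h2 : t ^ (-(3:ℝ)/2) = (t ^ (-(3:ℝ)/4)) ^ 2 := by
      rw [show (-(3:ℝ)/2) = (-(3:ℝ)/4) * 2 by norm_num, Real.rpow_mul ht0.le, Real.rpow_two]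
    rw [Real.norm_eq_abs, abs_of_nonneg (Real.sqrt_nonneg _), Real.norm_eq_abs,
      abs_of_pos (Real.rpow_pos_of_pos ht0 _)]
    calc Real.sqrt (∫ x, (deriv (z t) x) ^ 2) ≤ Real.sqrt (C * t ^ (-(3:ℝ)/2)) :=
          Real.sqrt_le_sqrt h1
      _ = Real.sqrt C * t ^ (-(3:ℝ)/4) := by
          rw [h2, Real.sqrt_mul hC0, Real.sqrt_sq (Real.rpow_nonneg ht0.le _)]
  · rw [Asymptotics.isBigO_iff]
    refine ⟨C, ?_⟩
    filter_upwards [hev] with t ht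
    have ht0 : 0 < t := lt_of_lt_of_le one_pos ht
    have h1 := (key t ht).2
    have hnn : 0 ≤ ∫ x in Set.Ioo (-Real.sqrt t) (Real.sqrt t), (deriv (z t) x) ^ 2 :=
      integral_nonneg fun x => sq_nonneg _
    rw [Real.norm_eq_abs, abs_of_nonneg (by linarith), Real.norm_eq_abs,
      abs_of_pos (Real.rpow_pos_of_pos ht0 _)]
    linarith
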